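/- For every odd d and every n ≥ d, the symmetric tensor rank (Waring rank) of the elementary symmetric polynomial σ_{d,n} over ℂ is at most Σ_{i=0}^{(d-1)/2} C(n,i). -/

import Mathlib

/-!
Write `d = 2m + 1` and let `ℓ_S = ∑_j ε_j x_j` with `ε_j = -1` for `j ∈ S` and `ε_j = 1`
otherwise, for the `∑_{i ≤ m} C(n, i)` sets `S` with `|S| ≤ m`. The coefficient of `x^α`
(`|α| = d`) in `∑_S c_{|S|} ℓ_S^d` is `multinomial(α) · ∑_k c_k K_k(t)`, where `t` is the number
of odd exponents of `α` and `K_k(t) = [z^k] (1 - z)^t (1 + z)^(n - t)` is a Krawtchouk number.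
Since `t` is odd, and `t = d` exactly when `x^α` is squarefree, it suffices to solve the square
system `∑_k c_k K_k(2s + 1) = δ_{s,m} / d!` for `s ≤ m`.

Its matrix is invertible: a kernel vector gives an odd polynomial `f` of degree `≤ d` whose
transform `(1 + z)^n f((1 - z)/(1 + z))` vanishes to order `m + 1` at `0`. The transform is an
involution up to `2^n`, so `(1 - z)^(m+1)` divides `f`; by oddness so does `(1 + z)^(m+1)`, which
forces `f = 0`. Over `ℂ` each `c_k` is a `d`-th power and is absorbed into the linear forms.
-/

open MvPolynomial Finset

/-- The symmetric tensor (Waring) rank of a form `F ∈ ℂ[x_1,…,x_n]` of degree `d`: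
the least `s` such that `F = ∑_{i=1}^s L_i^d` with `L_i` linear forms. -/
noncomputable def waringRank {n : ℕ} (d : ℕ) (F : MvPolynomial (Fin n) ℂ) : ℕ :=
  sInf {s | ∃ L : Fin s → Fin n → ℂ, F = ∑ i, (∑ j, C (L i j) * X j) ^ d}

namespace Polynomial

variable {R : Type*} [CommRing R]

/-- `cayleyTransform N p = (1 + X) ^ N * p ((1 - X) / (1 + X))`, computed through the
homogenization of `p` in degree `N`. -/
noncomputable def cayleyTransform (N : ℕ) : R[X] →ₗ[R] R[X] :=
  (MvPolynomial.aeval ![1 - X, 1 + X]).toLinearMap ∘ₗ homogenizeLM N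

lemma cayleyTransform_apply (N : ℕ) (p : R[X]) :
    cayleyTransform N p = MvPolynomial.aeval ![1 - X, 1 + X] (p.homogenize N) := rfl

lemma cayleyTransform_mul {p q : R[X]} {a b : ℕ} (hp : p.natDegree ≤ a) (hq : q.natDegree ≤ b) :
    cayleyTransform (a + b) (p * q) = cayleyTransform a p * cayleyTransform b q := by
  simp only [cayleyTransform_apply, homogenize_mul p q hp hq, map_mul]

lemma cayleyTransform_X_pow {k N : ℕ} (h : k ≤ N) :
    cayleyTransform N (X ^ k : R[X]) = (1 - X) ^ k * (1 + X) ^ (N - k) := by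
  simp [cayleyTransform_apply, homogenize_X_pow h]

lemma cayleyTransform_one_sub_X : cayleyTransform 1 (1 - X : R[X]) = 2 * X := by
  simp [cayleyTransform_apply, homogenize_sub, homogenize_X, two_mul]

lemma cayleyTransform_one_add_X : cayleyTransform 1 (1 + X : R[X]) = 2 := by
  simp [cayleyTransform_apply, homogenize_X, one_add_one_eq_two]

lemma cayleyTransform_pow {p : R[X]} (hp : p.natDegree ≤ 1) (k : ℕ) :
    cayleyTransform k (p ^ k) = cayleyTransform 1 p ^ k := by
  induction k with
  | zero => simp [cayleyTransform_apply]
  | succ k ih =>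
    rw [pow_succ, cayleyTransform_mul (by simpa using natDegree_pow_le_of_le k hp) hp, ih,
      pow_succ]

lemma natDegree_cayleyTransform_le (N : ℕ) (p : R[X]) :
    (cayleyTransform N p).natDegree ≤ N := by
  rw [cayleyTransform_apply, homogenize]
  simp only [MvPolynomial.monomial_fin_two, map_sum]
  refine natDegree_sum_le_of_forall_le _ _ fun kl hkl => ?_
  rw [HasAntidiagonal.mem_antidiagonal] at hkl
  simp only [map_mul, map_pow, MvPolynomial.aeval_C, MvPolynomial.aeval_X, algebraMap_eq,
    Matrix.cons_val_zero, Matrix.cons_val_one, Matrix.cons_val_fin_one, Finsupp.coe_update,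
    Function.update_self, Function.update_of_ne zero_ne_one, Finsupp.single_eq_same]
  compute_degree
  omega

lemma cayleyTransform_cayleyTransform_X_pow (k l : ℕ) :
    cayleyTransform (k + l) (cayleyTransform (k + l) (X ^ k : R[X])) = 2 ^ (k + l) * X ^ k := by
  have h₁ : (1 - X : R[X]).natDegree ≤ 1 := by compute_degree
  have h₂ : (1 + X : R[X]).natDegree ≤ 1 := by compute_degree
  rw [cayleyTransform_X_pow (Nat.le_add_right k l), Nat.add_sub_cancel_left,
    cayleyTransform_mul (by simpa using natDegree_pow_le_of_le k h₁)
      (by simpa using natDegree_pow_le_of_le l h₂),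
    cayleyTransform_pow h₁, cayleyTransform_pow h₂, cayleyTransform_one_sub_X,
    cayleyTransform_one_add_X]
  ring

theorem cayleyTransform_cayleyTransform {N : ℕ} {p : R[X]} (hp : p.natDegree ≤ N) :
    cayleyTransform N (cayleyTransform N p) = 2 ^ N * p := by
  rw [p.as_sum_range_C_mul_X_pow' (Nat.lt_succ_of_le hp)]
  simp only [map_sum, Finset.mul_sum, ← smul_eq_C_mul, map_smul]
  refine sum_congr rfl fun k hk => ?_
  obtain ⟨l, rfl⟩ := Nat.exists_eq_add_of_le (mem_range_succ_iff.mp hk)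
  rw [cayleyTransform_cayleyTransform_X_pow, mul_smul_comm]

lemma isCoprime_one_sub_X_one_add_X {K : Type*} [Field K] [NeZero (2 : K)] :
    IsCoprime (1 - X : K[X]) (1 + X) :=
  ⟨C 2⁻¹, C 2⁻¹, by
    rw [← mul_add, show (1 - X + (1 + X) : K[X]) = C 2 by rw [map_ofNat]; ring, ← C_mul,
      inv_mul_cancel₀ two_ne_zero, C_1]⟩

theorem eq_zero_of_X_pow_dvd_cayleyTransform {K : Type*} [Field K] [NeZero (2 : K)] {f : K[X]}
    {m N : ℕ} (hodd : f.comp (-X) = -f) (hf : f.natDegree ≤ 2 * m + 1) (hN : 2 * m + 1 ≤ N)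
    (hdvd : X ^ (m + 1) ∣ cayleyTransform N f) : f = 0 := by
  obtain ⟨S, hS⟩ := hdvd
  have hS_deg : S.natDegree ≤ N - (m + 1) := by
    rcases eq_or_ne S 0 with rfl | hS0
    · simp
    have := natDegree_cayleyTransform_le N f
    rw [hS, natDegree_X_pow_mul _ hS0] at this
    omega
  have h_sub : (1 - X) ^ (m + 1) ∣ f := by
    have hunit : IsUnit (2 ^ N : K[X]) := by
      rw [← map_ofNat C, ← map_pow]
      exact isUnit_C.mpr (pow_ne_zero N two_ne_zero).isUnit
    rw [← hunit.dvd_mul_left, ← cayleyTransform_cayleyTransform (hf.trans hN), hS,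
      show N = (m + 1) + (N - (m + 1)) by omega,
      cayleyTransform_mul (natDegree_X_pow_le _) hS_deg, cayleyTransform_X_pow le_rfl]
    simp
  have h_add : (1 + X) ^ (m + 1) ∣ f := by
    simpa [hodd] using _root_.map_dvd (compRingHom (-X : K[X])) h_sub
  refine eq_zero_of_dvd_of_natDegree_lt
    ((isCoprime_one_sub_X_one_add_X.pow).mul_dvd h_sub h_add) ?_
  have : ((1 - X) ^ (m + 1) * (1 + X) ^ (m + 1) : K[X]).natDegree = 2 * m + 2 := by
    rw [← mul_pow]
    compute_degree! <;> omega
  omega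

variable (R) in
noncomputable def krawtchouk (N k t : ℕ) : R :=
  ((1 - X) ^ t * (1 + X) ^ (N - t) : R[X]).coeff k

lemma injective_mulVec_krawtchouk_odd {K : Type*} [Field K] [NeZero (2 : K)] {m N : ℕ}
    (hN : 2 * m + 1 ≤ N) :
    Function.Injective
      (Matrix.of fun k s : Fin (m + 1) => krawtchouk K N k (2 * s + 1)).mulVec := by
  set A := Matrix.of fun k s : Fin (m + 1) => krawtchouk K N k (2 * s + 1)
  rw [← Matrix.coe_mulVecLin, injective_iff_map_eq_zero]
  intro v hv
  set f : K[X] := ∑ s, C (v s) * X ^ (2 * (s : ℕ) + 1)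
  have hodd : f.comp (-X) = -f := by
    simp [f, Polynomial.sum_comp, Odd.neg_pow ⟨_, rfl⟩, sum_neg_distrib]
  have hdeg : f.natDegree ≤ 2 * m + 1 :=
    natDegree_sum_le_of_forall_le _ _ fun s _ =>
      (natDegree_C_mul_X_pow_le _ _).trans (by have := s.isLt; omega)
  have hdvd : X ^ (m + 1) ∣ cayleyTransform N f := by
    refine X_pow_dvd_iff.mpr fun k hk => ?_
    have hk' := congrFun hv ⟨k, hk⟩
    simp only [Matrix.coe_mulVecLin, Matrix.mulVec, dotProduct, A, Matrix.of_apply,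
      Pi.zero_apply] at hk'
    simp only [f, map_sum, ← smul_eq_C_mul, map_smul]
    rw [finsetSum_coeff, ← hk']
    refine sum_congr rfl fun s _ => ?_
    rw [cayleyTransform_X_pow (by have := s.isLt; omega), coeff_smul, smul_eq_mul, mul_comm]
    rfl
  have hf := eq_zero_of_X_pow_dvd_cayleyTransform hodd hdeg hN hdvd
  funext s
  simpa [f, finsetSum_coeff, coeff_C_mul_X_pow, Fin.val_inj] using
    congrArg (coeff · (2 * (s : ℕ) + 1)) hf

theorem exists_sum_mul_krawtchouk_odd_eq {K : Type*} [Field K] [NeZero (2 : K)] {m N : ℕ}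
    (hN : 2 * m + 1 ≤ N) (y : ℕ → K) :
    ∃ c : ℕ → K, ∀ s ≤ m, ∑ k ∈ range (m + 1), c k * krawtchouk K N k (2 * s + 1) = y s := by
  have hunit :=
    Matrix.mulVec_injective_iff_isUnit.mp (injective_mulVec_krawtchouk_odd (K := K) hN)
  obtain ⟨c, hc⟩ := Matrix.vecMul_surjective_iff_isUnit.mpr hunit fun s => y s
  refine ⟨fun k => if h : k < m + 1 then c ⟨k, h⟩ else 0, fun s hs => ?_⟩
  rw [← Fin.sum_univ_eq_sum_range, ← congrFun hc ⟨s, Nat.lt_succ_of_le hs⟩]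
  simp [Matrix.vecMul, dotProduct, Fin.is_le]

lemma coeff_prod_C_mul_X_add_one {σ S : Type*} [DecidableEq σ] [CommSemiring S] (s : Finset σ)
    (r : σ → S) (k : ℕ) :
    (∏ i ∈ s, (C (r i) * X + 1)).coeff k = ∑ t ∈ powersetCard k s, ∏ i ∈ t, r i := by
  simp only [prod_add, prod_const_one, mul_one, prod_mul_distrib, prod_const, ← map_prod,
    finsetSum_coeff, coeff_C_mul_X_pow, powersetCard_eq_filter, sum_filter, eq_comm (a := k)]

lemma prod_neg_one_pow_mul_X_add_one {σ : Type*} [Fintype σ] (α : σ → ℕ) :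
    ∏ i, (C ((-1 : R) ^ α i) * X + 1) =
      (1 - X) ^ #{i | Odd (α i)} * (1 + X) ^ (Fintype.card σ - #{i | Odd (α i)}) := by
  classical
  rw [← prod_filter_mul_prod_filter_not univ (fun i => Odd (α i)), ← card_univ,
    ← card_filter_add_card_filter_not (s := univ) (fun i => Odd (α i)), Nat.add_sub_cancel_left,
    ← prod_const, ← prod_const]
  congr 1 <;> refine prod_congr rfl fun i hi => ?_ <;> rw [mem_filter] at hi
  · rw [hi.2.neg_one_pow, map_neg, map_one]; ring
  · rw [(Nat.not_odd_iff_even.mp hi.2).neg_one_pow, map_one]; ring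

lemma sum_powersetCard_prod_neg_one_pow {σ : Type*} [Fintype σ] [DecidableEq σ] (α : σ → ℕ)
    (k : ℕ) :
    ∑ S ∈ powersetCard k univ, ∏ i ∈ S, (-1 : R) ^ α i =
      krawtchouk R (Fintype.card σ) k #{i | Odd (α i)} := by
  rw [krawtchouk, ← prod_neg_one_pow_mul_X_add_one, coeff_prod_C_mul_X_add_one]

end Polynomial

open Polynomial (krawtchouk exists_sum_mul_krawtchouk_odd_eq sum_powersetCard_prod_neg_one_pow)
open scoped Nat

lemma sum_single_one_eq_iff {σ : Type*} [DecidableEq σ] (t : Finset σ) (α : σ →₀ ℕ) :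
    ∑ i ∈ t, Finsupp.single i 1 = α ↔ t = α.support ∧ ∀ i, α i ≤ 1 := by
  have happly (j : σ) : (∑ i ∈ t, Finsupp.single i 1) j = if j ∈ t then 1 else 0 := by
    simp [Finsupp.finsetSum_apply, Finsupp.single_apply]
  constructor
  · rintro rfl
    refine ⟨?_, fun j => ?_⟩
    · ext j
      simp [happly]
    · rw [happly]
      split <;> omega
  · rintro ⟨rfl, hα⟩
    ext j
    rw [happly]
    split_ifs with hj
    · have := hα j
      have := Finsupp.mem_support_iff.mp hj
      omega
    · exact (Finsupp.notMem_support_iff.mp hj).symm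

theorem coeff_esymm {σ R : Type*} [Fintype σ] [DecidableEq σ] [CommSemiring R] (n : ℕ)
    (α : σ →₀ ℕ) :
    coeff α (esymm σ R n) = if ∑ i, α i = n ∧ ∀ i, α i ≤ 1 then 1 else 0 := by
  simp only [esymm_eq_sum_monomial, coeff_sum, coeff_monomial, sum_single_one_eq_iff]
  by_cases hα : ∀ i, α i ≤ 1
  · have hcard : ∑ i, α i = #α.support := by
      rw [← Finsupp.degree_eq_sum, Finsupp.degree_apply, card_eq_sum_ones]
      refine sum_congr rfl fun i hi => ?_
      have := hα i
      have := Finsupp.mem_support_iff.mp hi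
      omega
    simp [hα, hcard]
  · simp [hα]

lemma sum_eq_card_odd_add_two_mul {σ : Type*} [Fintype σ] (α : σ → ℕ) :
    ∑ i, α i = #{i | Odd (α i)} + 2 * ∑ i, α i / 2 := by
  classical
  rw [card_filter, mul_sum, ← sum_add_distrib]
  refine sum_congr rfl fun i _ => ?_
  split_ifs with h
  · rw [Nat.odd_iff] at h; omega
  · rw [Nat.not_odd_iff] at h; omega

lemma multinomial_eq_factorial_of_le_one {σ : Type*} [Fintype σ] {α : σ →₀ ℕ}
    (hα : ∀ i, α i ≤ 1) : α.multinomial = (∑ i, α i)! := by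
  rw [Finsupp.multinomial_eq_of_support_subset (subset_univ _), ← Nat.multinomial_spec,
    prod_eq_one fun i _ => Nat.factorial_eq_one.mpr (hα i), one_mul]

lemma filter_card_eq_powersetCard_of_le {σ : Type*} [Fintype σ] {k m : ℕ} (hk : k ≤ m) :
    {S ∈ univ.filter (fun S : Finset σ => #S ≤ m) | #S = k} = powersetCard k univ := by
  ext S
  simp only [mem_filter, mem_univ, true_and, mem_powersetCard_univ, and_iff_right_iff_imp]
  rintro rfl
  exact hk

lemma card_filter_card_le (σ : Type*) [Fintype σ] (m : ℕ) :
    #(univ.filter (fun S : Finset σ => #S ≤ m)) =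
      ∑ k ∈ range (m + 1), (Fintype.card σ).choose k := by
  rw [card_eq_sum_card_fiberwise (f := card) (t := range (m + 1))
    fun S hS => mem_range_succ_iff.mpr (mem_filter.mp hS).2]
  refine sum_congr rfl fun k hk => ?_
  rw [filter_card_eq_powersetCard_of_le (mem_range_succ_iff.mp hk), card_powersetCard, card_univ]

lemma sum_filter_card_le_mul_prod_sign_pow {σ K : Type*} [Fintype σ] [DecidableEq σ] [CommRing K]
    (m : ℕ) (c : ℕ → K) (α : σ → ℕ) :
    ∑ S ∈ univ.filter (fun S : Finset σ => #S ≤ m), c #S * ∏ i, (if i ∈ S then -1 else 1) ^ α i =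
      ∑ k ∈ range (m + 1), c k * krawtchouk K (Fintype.card σ) k #{i | Odd (α i)} := by
  rw [← sum_fiberwise_of_maps_to (g := card) (t := range (m + 1))
    (fun S hS => mem_range_succ_iff.mpr (mem_filter.mp hS).2)]
  refine sum_congr rfl fun k hk => ?_
  rw [filter_card_eq_powersetCard_of_le (mem_range_succ_iff.mp hk),
    ← sum_powersetCard_prod_neg_one_pow, mul_sum]
  refine sum_congr rfl fun S hS => ?_
  rw [mem_powersetCard_univ.mp hS]
  simp only [ite_pow, one_pow, Fintype.prod_ite_mem]

theorem exists_esymm_odd_eq_sum_C_mul_pow {σ K : Type*} [Fintype σ] [DecidableEq σ] [Field K]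
    [CharZero K] {m : ℕ} (hm : 2 * m + 1 ≤ Fintype.card σ) :
    ∃ c : ℕ → K, esymm σ K (2 * m + 1) =
      ∑ S ∈ univ.filter (fun S : Finset σ => #S ≤ m),
        C (c #S) * (∑ i, C (if i ∈ S then -1 else 1) * X i) ^ (2 * m + 1) := by
  obtain ⟨c, hc⟩ := exists_sum_mul_krawtchouk_odd_eq (K := K) hm
    fun s => if s = m then ((2 * m + 1)! : K)⁻¹ else 0
  refine ⟨c, MvPolynomial.ext _ _ fun α => ?_⟩
  simp only [coeff_esymm, coeff_sum, coeff_C_mul]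
  simp only [← smul_eq_C_mul, coeff_linearCombination_X_pow_of_fintype]
  rw [Finsupp.sum_fintype _ _ fun _ => rfl]
  by_cases hα : ∑ i, α i = 2 * m + 1
  swap
  · simp [hα]
  simp only [hα, true_and, if_true, Finsupp.prod_fintype _ _ fun _ => pow_zero _,
    mul_left_comm (c _), ← mul_sum, sum_filter_card_le_mul_prod_sign_pow]
  have hparity := sum_eq_card_odd_add_two_mul α
  obtain ⟨s, hs⟩ : ∃ s, #{i | Odd (α i)} = 2 * s + 1 := ⟨(#{i | Odd (α i)} - 1) / 2, by omega⟩
  have hsquarefree : (∀ i, α i ≤ 1) ↔ s = m := by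
    rw [show s = m ↔ ∑ i, α i / 2 = 0 by omega, sum_eq_zero_iff]
    exact ⟨fun h i _ => by have := h i; omega, fun h i => by have := h i (mem_univ i); omega⟩
  rw [hs, hc s (by omega)]
  by_cases hsm : s = m
  · rw [if_pos (hsquarefree.mpr hsm), if_pos hsm,
      multinomial_eq_factorial_of_le_one (hsquarefree.mpr hsm), hα,
      mul_inv_cancel₀ (Nat.cast_ne_zero.mpr (Nat.factorial_ne_zero _))]
  · rw [if_neg (mt hsquarefree.mp hsm), if_neg hsm, mul_zero]

lemma waringRank_le_card {n d : ℕ} (hd : d ≠ 0) {ι : Type*} (s : Finset ι) (c : ι → ℂ)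
    (L : ι → Fin n → ℂ) {F : MvPolynomial (Fin n) ℂ}
    (hF : F = ∑ i ∈ s, C (c i) * (∑ j, C (L i j) * X j) ^ d) :
    waringRank d F ≤ #s := by
  choose r hr using fun i => IsAlgClosed.exists_pow_nat_eq (c i) (Nat.pos_of_ne_zero hd)
  have hterm (i : ι) :
      C (c i) * (∑ j, C (L i j) * X j) ^ d = (∑ j, C (r i * L i j) * X j) ^ d := by
    simp only [← hr, map_pow, ← mul_pow, mul_sum, map_mul, mul_assoc]
  refine Nat.sInf_le ⟨fun k j => r (s.equivFin.symm k) * L (s.equivFin.symm k) j, ?_⟩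
  rw [hF, sum_congr rfl fun i _ => hterm i, ← sum_coe_sort s]
  exact (Equiv.sum_comp s.equivFin.symm fun i : s => (∑ j, C (r i * L i j) * X j) ^ d).symm

/-- For odd `d` and `n ≥ d`, the Waring rank of `σ_{d,n}` is at most
`∑_{i=0}^{(d-1)/2} C(n,i)`. -/
theorem waringRank_esymm_odd_le (d n : ℕ) (hd : Odd d) (hn : d ≤ n) :
    waringRank d (esymm (Fin n) ℂ d) ≤ ∑ i ∈ range ((d - 1) / 2 + 1), n.choose i := by
  obtain ⟨m, rfl⟩ := hd
  obtain ⟨c, hc⟩ := exists_esymm_odd_eq_sum_C_mul_pow (K := ℂ) (σ := Fin n) (by simpa using hn)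
  calc waringRank (2 * m + 1) (esymm (Fin n) ℂ (2 * m + 1))
      ≤ #(univ.filter fun S : Finset (Fin n) => #S ≤ m) := waringRank_le_card (by omega) _ _ _ hc
    _ = ∑ i ∈ range ((2 * m + 1 - 1) / 2 + 1), n.choose i := by
      rw [card_filter_card_le, Fintype.card_fin, show (2 * m + 1 - 1) / 2 = m by omega]
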